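/- Let L be a nonnegative random variable with an asymptotically exponential tail with decay rate μ > 0, let M ≥ 2 be an integer and λ, ν > 0. Define the random variable N̄ by P[N̄ > n] = E[(1 − ((λ∧ν)/(M(λ∨ν))) e^{−L(M−1)(λ∨ν)})^n] for n ∈ ℕ. Then lim_{n→∞} (log P[N̄ > n]) / (log n) = −μ / ((M−1)(λ∨ν)). -/

import Mathlib

/-!
Write `p x = P[L > x]`, so that `log p x ~ -μ x`, and `I n = E[(1 - c e^{-aL})^n]`. The integrand is
close to `1` where `e^{-aL} ≪ 1/n` and exponentially small where `e^{-aL} ≫ 1/n`, so `I n` behaves like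
`p (log n / a) = n^{-μ/a + o(1)}`. Precisely, for `0 < ε < 1` and `x± = (1 ± ε) log n / a`, Bernoulli's
inequality gives `I n ≥ (1 - c n^{-(1+ε)})^n p x₊ ≥ p x₊ / 2`, and splitting at `x₋` with
`1 - y ≤ e^{-y}` gives `I n ≤ p x₋ + exp (-c n^ε) ≤ 2 p x₋`, the last step because `p x₋` decays only
polynomially in `n`. So `log I n / log n` lies eventually between `-μ (1 ± ε) / a + o(1)`; let `ε → 0`.
-/

open MeasureTheory Filter

open Real Topology

theorem tendsto_of_forall_eventually_bounds {α ι β : Type*} [TopologicalSpace β] [LinearOrder β]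
    [OrderTopology β] {l : Filter α} {l' : Filter ι} [l'.NeBot] {u : α → β}
    {lo hi : ι → α → β} {flo fhi : ι → β} {y : β}
    (hflo : Tendsto flo l' (𝓝 y)) (hfhi : Tendsto fhi l' (𝓝 y))
    (hlo : ∀ᶠ i in l', Tendsto (lo i) l (𝓝 (flo i)) ∧ ∀ᶠ n in l, lo i n ≤ u n)
    (hhi : ∀ᶠ i in l', Tendsto (hi i) l (𝓝 (fhi i)) ∧ ∀ᶠ n in l, u n ≤ hi i n) :
    Tendsto u l (𝓝 y) := by
  refine tendsto_order.2 ⟨fun b hb => ?_, fun b hb => ?_⟩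
  · obtain ⟨i, hbi, hi_lim, hi_le⟩ := ((hflo.eventually (lt_mem_nhds hb)).and hlo).exists
    filter_upwards [hi_lim.eventually (lt_mem_nhds hbi), hi_le] with n h1 h2
    exact h1.trans_le h2
  · obtain ⟨i, hbi, hi_lim, hi_le⟩ := ((hfhi.eventually (gt_mem_nhds hb)).and hhi).exists
    filter_upwards [hi_lim.eventually (gt_mem_nhds hbi), hi_le] with n h1 h2
    exact h2.trans_lt h1

theorem tendsto_log_natCast_atTop : Tendsto (fun n : ℕ => log n) atTop atTop :=
  tendsto_log_atTop.comp tendsto_natCast_atTop_atTop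

theorem mul_exp_neg_mul_log {x : ℝ} (hx : 0 < x) (s : ℝ) :
    x * exp (-(s * log x)) = exp (-((s - 1) * log x)) := by
  nth_rewrite 1 [← exp_log hx]
  rw [← exp_add]
  ring_nf

theorem eventually_half_le_one_sub_mul_exp_pow {c ε : ℝ} (hc0 : 0 ≤ c) (hc1 : c ≤ 1)
    (hε : 0 < ε) : ∀ᶠ n : ℕ in atTop, 1 / 2 ≤ (1 - c * exp (-((1 + ε) * log n))) ^ n := by
  have hsmall : Tendsto (fun n : ℕ => c * exp (-(ε * log n))) atTop (𝓝 0) := by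
    simpa using (tendsto_exp_atBot.comp
      (tendsto_neg_atTop_atBot.comp (tendsto_log_natCast_atTop.const_mul_atTop hε))).const_mul c
  filter_upwards [eventually_ge_atTop 1, hsmall.eventually_le_const (by norm_num : (0:ℝ) < 1 / 2)]
    with n hn hsmall_n
  have hn0 : (0:ℝ) < n := by exact_mod_cast hn
  have hexp_le : exp (-((1 + ε) * log n)) ≤ 1 :=
    exp_le_one_iff.2 (neg_nonpos.2 (by positivity))
  have hbernoulli := one_add_mul_le_pow (a := -(c * exp (-((1 + ε) * log n))))
    (by nlinarith) n
  have hcollapse : (n:ℝ) * -(c * exp (-((1 + ε) * log n))) = -(c * exp (-(ε * log n))) := by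
    rw [mul_neg, mul_left_comm, mul_exp_neg_mul_log hn0, add_sub_cancel_left]
  rw [hcollapse, ← sub_eq_add_neg, ← sub_eq_add_neg] at hbernoulli
  linarith

section Tail

variable {p : ℝ → ℝ} {μ : ℝ}

theorem eventually_ne_zero_of_tendsto_log_div (hμ : μ ≠ 0)
    (htail : Tendsto (fun x => log (p x) / x) atTop (𝓝 (-μ))) : ∀ᶠ x in atTop, p x ≠ 0 := by
  filter_upwards [htail.eventually_ne (neg_ne_zero.2 hμ)] with x hx hpx
  simp [hpx] at hx

theorem tendsto_const_add_log_comp_mul_log_div_log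
    (htail : Tendsto (fun x => log (p x) / x) atTop (𝓝 (-μ))) {k : ℝ} (hk : 0 < k) (C : ℝ) :
    Tendsto (fun n : ℕ => (C + log (p (k * log n))) / log n) atTop (𝓝 (-μ * k)) := by
  have hx : Tendsto (fun n : ℕ => k * log n) atTop atTop :=
    tendsto_log_natCast_atTop.const_mul_atTop hk
  have hmain : Tendsto (fun n : ℕ => log (p (k * log n)) / log n) atTop (𝓝 (-μ * k)) := by
    refine ((htail.comp hx).mul_const k).congr' ?_
    filter_upwards [tendsto_log_natCast_atTop.eventually_gt_atTop 0] with n hn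
    simp only [Function.comp_apply]
    field_simp
  simpa using (tendsto_const_nhds.div_atTop tendsto_log_natCast_atTop).add hmain
    |>.congr (fun n => (add_div C _ _).symm)

theorem eventually_exp_neg_mul_exp_le (hp0 : ∀ x, 0 ≤ p x) (hμ : μ ≠ 0)
    (htail : Tendsto (fun x => log (p x) / x) atTop (𝓝 (-μ))) {c ε k : ℝ} (hc : 0 < c)
    (hε : 0 < ε) (hk : 0 < k) :
    ∀ᶠ n : ℕ in atTop, exp (-(c * exp (ε * log n))) ≤ p (k * log n) := by
  have hgrowth : Tendsto (fun n : ℕ => c * exp (ε * log n) / log n) atTop atTop := by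
    refine (((tendsto_exp_mul_div_rpow_atTop 1 ε hε).const_mul_atTop hc).comp
      tendsto_log_natCast_atTop).congr fun n => ?_
    simp [mul_div_assoc]
  have hne := (tendsto_log_natCast_atTop.const_mul_atTop hk).eventually
    (eventually_ne_zero_of_tendsto_log_div hμ htail)
  filter_upwards [((tendsto_const_add_log_comp_mul_log_div_log htail hk 0).add_atTop
    hgrowth).eventually_ge_atTop 0, hne, tendsto_log_natCast_atTop.eventually_gt_atTop 0]
    with n hsum hpn hlogn
  have hlog_ge : -(c * exp (ε * log n)) ≤ log (p (k * log n)) := by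
    rw [zero_add, ← add_div, le_div_iff₀ hlogn, zero_mul] at hsum
    linarith
  calc exp (-(c * exp (ε * log n))) ≤ exp (log (p (k * log n))) := exp_le_exp.2 hlog_ge
    _ = p (k * log n) := exp_log ((hp0 _).lt_of_ne' hpn)

end Tail

section Base

variable {c a : ℝ}

theorem one_sub_mul_exp_neg_mul_le_one (hc : 0 ≤ c) (t : ℝ) : 1 - c * exp (-(t * a)) ≤ 1 := by
  have := exp_pos (-(t * a))
  nlinarith

theorem one_sub_mul_exp_neg_mul_mono (hc : 0 ≤ c) (ha : 0 ≤ a) {s t : ℝ} (hst : s ≤ t) :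
    1 - c * exp (-(s * a)) ≤ 1 - c * exp (-(t * a)) := by
  gcongr

theorem one_sub_le_one_sub_mul_exp_neg_mul (hc : 0 ≤ c) (ha : 0 ≤ a) {t : ℝ} (ht : 0 ≤ t) :
    1 - c ≤ 1 - c * exp (-(t * a)) := by
  simpa using one_sub_mul_exp_neg_mul_mono hc ha ht

end Base

section Integral

variable {Ω : Type*} {mΩ : MeasurableSpace Ω} (P : Measure Ω) [IsProbabilityMeasure P]
  {L : Ω → ℝ} {c a : ℝ}

theorem integrable_one_sub_mul_exp_neg_mul_pow (hL : Measurable L) (hL0 : ∀ ω, 0 ≤ L ω)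
    (hc0 : 0 ≤ c) (hc1 : c ≤ 1) (ha : 0 ≤ a) (n : ℕ) :
    Integrable (fun ω => (1 - c * exp (-(L ω * a))) ^ n) P := by
  refine .of_bound (by fun_prop) 1 (ae_of_all _ fun ω => ?_)
  have hbase := one_sub_le_one_sub_mul_exp_neg_mul hc0 ha (hL0 ω)
  rw [norm_pow, Real.norm_of_nonneg (by linarith)]
  exact pow_le_one₀ (by linarith) (one_sub_mul_exp_neg_mul_le_one hc0 _)

theorem one_sub_pow_le_integral (hL : Measurable L) (hL0 : ∀ ω, 0 ≤ L ω)
    (hc0 : 0 ≤ c) (hc1 : c ≤ 1) (ha : 0 ≤ a) (n : ℕ) :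
    (1 - c) ^ n ≤ ∫ ω, (1 - c * exp (-(L ω * a))) ^ n ∂P := by
  calc (1 - c) ^ n = ∫ _ω, (1 - c) ^ n ∂P := by simp
    _ ≤ _ := integral_mono (integrable_const _)
        (integrable_one_sub_mul_exp_neg_mul_pow P hL hL0 hc0 hc1 ha n) fun ω =>
          pow_le_pow_left₀ (by linarith) (one_sub_le_one_sub_mul_exp_neg_mul hc0 ha (hL0 ω)) n

theorem pow_mul_measureReal_lt_le_integral (hL : Measurable L) (hL0 : ∀ ω, 0 ≤ L ω)
    (hc0 : 0 ≤ c) (hc1 : c ≤ 1) (ha : 0 ≤ a) {x : ℝ} (hx : 0 ≤ x) (n : ℕ) :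
    (1 - c * exp (-(x * a))) ^ n * P.real {ω | x < L ω} ≤
      ∫ ω, (1 - c * exp (-(L ω * a))) ^ n ∂P := by
  have hS : MeasurableSet {ω | x < L ω} := hL measurableSet_Ioi
  have hbase_x := one_sub_le_one_sub_mul_exp_neg_mul hc0 ha hx
  calc (1 - c * exp (-(x * a))) ^ n * P.real {ω | x < L ω}
      = ∫ ω, {ω | x < L ω}.indicator (fun _ => (1 - c * exp (-(x * a))) ^ n) ω ∂P := by
        rw [integral_indicator_const _ hS, smul_eq_mul, mul_comm]
    _ ≤ _ := by
      refine integral_mono ((integrable_const _).indicator hS)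
        (integrable_one_sub_mul_exp_neg_mul_pow P hL hL0 hc0 hc1 ha n) fun ω => ?_
      by_cases hω : ω ∈ {ω | x < L ω}
      · rw [Set.indicator_of_mem hω]
        exact pow_le_pow_left₀ (by linarith)
          (one_sub_mul_exp_neg_mul_mono hc0 ha (le_of_lt hω)) n
      · rw [Set.indicator_of_notMem hω]
        exact pow_nonneg (by linarith [one_sub_le_one_sub_mul_exp_neg_mul hc0 ha (hL0 ω)]) n

theorem integral_le_measureReal_lt_add_exp (hL : Measurable L) (hL0 : ∀ ω, 0 ≤ L ω)
    (hc0 : 0 ≤ c) (hc1 : c ≤ 1) (ha : 0 ≤ a) (x : ℝ) (n : ℕ) :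
    ∫ ω, (1 - c * exp (-(L ω * a))) ^ n ∂P ≤
      P.real {ω | x < L ω} + exp (-(n * (c * exp (-(x * a))))) := by
  have hS : MeasurableSet {ω | x < L ω} := hL measurableSet_Ioi
  calc ∫ ω, (1 - c * exp (-(L ω * a))) ^ n ∂P
      ≤ ∫ ω, ({ω | x < L ω}.indicator 1 ω + exp (-(n * (c * exp (-(x * a)))))) ∂P := by
        refine integral_mono (integrable_one_sub_mul_exp_neg_mul_pow P hL hL0 hc0 hc1 ha n)
          (((integrable_const 1).indicator hS).add (integrable_const _)) fun ω => ?_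
        have hbase_nonneg : 0 ≤ 1 - c * exp (-(L ω * a)) := by
          linarith [one_sub_le_one_sub_mul_exp_neg_mul hc0 ha (hL0 ω)]
        by_cases hω : ω ∈ {ω | x < L ω}
        · rw [Set.indicator_of_mem hω, Pi.one_apply]
          have := pow_le_one₀ (n := n) hbase_nonneg
            (one_sub_mul_exp_neg_mul_le_one hc0 (a := a) (L ω))
          linarith [exp_pos (-(n * (c * exp (-(x * a)))))]
        · rw [Set.indicator_of_notMem hω, zero_add, ← mul_neg (n : ℝ), exp_nat_mul]
          refine pow_le_pow_left₀ hbase_nonneg ?_ n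
          calc 1 - c * exp (-(L ω * a)) ≤ 1 - c * exp (-(x * a)) :=
                one_sub_mul_exp_neg_mul_mono hc0 ha (not_lt.1 hω)
            _ ≤ exp (-(c * exp (-(x * a)))) := by
                linarith [add_one_le_exp (-(c * exp (-(x * a))))]
    _ = P.real {ω | x < L ω} + exp (-(n * (c * exp (-(x * a))))) := by
        rw [integral_add ((integrable_const 1).indicator hS) (integrable_const _),
          integral_indicator_one hS, integral_const, probReal_univ, one_smul]

end Integral

section Asymptotics

variable {Ω : Type*} {mΩ : MeasurableSpace Ω} (P : Measure Ω) [IsProbabilityMeasure P]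
  {L : Ω → ℝ} {c a μ : ℝ}

theorem eventually_log_tail_div_log_le_log_integral_div_log (hL : Measurable L)
    (hL0 : ∀ ω, 0 ≤ L ω) (hc0 : 0 ≤ c) (hc1 : c ≤ 1) (ha : 0 < a) (hμ : μ ≠ 0)
    (htail : Tendsto (fun x => log (P.real {ω | x < L ω}) / x) atTop (𝓝 (-μ)))
    {ε : ℝ} (hε : 0 < ε) :
    ∀ᶠ n : ℕ in atTop, (log (1 / 2) + log (P.real {ω | (1 + ε) / a * log n < L ω})) / log n ≤
      log (∫ ω, (1 - c * exp (-(L ω * a))) ^ n ∂P) / log n := by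
  have hk : 0 < (1 + ε) / a := by positivity
  filter_upwards [eventually_half_le_one_sub_mul_exp_pow hc0 hc1 hε,
    (tendsto_log_natCast_atTop.const_mul_atTop hk).eventually
      (eventually_ne_zero_of_tendsto_log_div hμ htail),
    tendsto_log_natCast_atTop.eventually_gt_atTop 0] with n hhalf hpn hlogn
  set x := (1 + ε) / a * log n
  have hxa : x * a = (1 + ε) * log n := by simp only [x]; field_simp
  have htail_pos : 0 < P.real {ω | x < L ω} := measureReal_nonneg.lt_of_ne' hpn
  have hbound : 1 / 2 * P.real {ω | x < L ω} ≤ ∫ ω, (1 - c * exp (-(L ω * a))) ^ n ∂P := by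
    refine le_trans ?_ (pow_mul_measureReal_lt_le_integral P hL hL0 hc0 hc1 ha.le
      (mul_nonneg hk.le hlogn.le) n)
    rw [hxa]
    gcongr
  rw [← log_mul (by norm_num) htail_pos.ne']
  gcongr

theorem eventually_log_integral_div_log_le_log_tail_div_log (hL : Measurable L)
    (hL0 : ∀ ω, 0 ≤ L ω) (hc0 : 0 < c) (hc1 : c < 1) (ha : 0 < a) (hμ : μ ≠ 0)
    (htail : Tendsto (fun x => log (P.real {ω | x < L ω}) / x) atTop (𝓝 (-μ)))
    {ε : ℝ} (hε0 : 0 < ε) (hε1 : ε < 1) :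
    ∀ᶠ n : ℕ in atTop, log (∫ ω, (1 - c * exp (-(L ω * a))) ^ n ∂P) / log n ≤
      (log 2 + log (P.real {ω | (1 - ε) / a * log n < L ω})) / log n := by
  have hk : 0 < (1 - ε) / a := div_pos (by linarith) ha
  filter_upwards
    [eventually_exp_neg_mul_exp_le (fun _ => measureReal_nonneg) hμ htail hc0 hε0 hk,
    (tendsto_log_natCast_atTop.const_mul_atTop hk).eventually
      (eventually_ne_zero_of_tendsto_log_div hμ htail),
    tendsto_log_natCast_atTop.eventually_gt_atTop 0, eventually_gt_atTop 0]
    with n hsmall hpn hlogn hn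
  set x := (1 - ε) / a * log n
  have hnexp : (n : ℝ) * exp (-(x * a)) = exp (ε * log n) := by
    rw [show x * a = (1 - ε) * log n by simp only [x]; field_simp,
      mul_exp_neg_mul_log (Nat.cast_pos.2 hn)]
    ring_nf
  have htail_pos : 0 < P.real {ω | x < L ω} := measureReal_nonneg.lt_of_ne' hpn
  have hbound : ∫ ω, (1 - c * exp (-(L ω * a))) ^ n ∂P ≤ 2 * P.real {ω | x < L ω} := by
    have := integral_le_measureReal_lt_add_exp P hL hL0 hc0.le hc1.le ha.le x n
    rw [mul_left_comm, hnexp] at this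
    linarith
  have hpos : 0 < ∫ ω, (1 - c * exp (-(L ω * a))) ^ n ∂P :=
    (pow_pos (by linarith) n).trans_le (one_sub_pow_le_integral P hL hL0 hc0.le hc1.le ha.le n)
  rw [← log_mul (by norm_num) htail_pos.ne']
  gcongr

theorem tendsto_log_integral_one_sub_mul_exp_neg_mul_pow_div_log (hL : Measurable L)
    (hL0 : ∀ ω, 0 ≤ L ω) (hc0 : 0 < c) (hc1 : c < 1) (ha : 0 < a) (hμ : μ ≠ 0)
    (htail : Tendsto (fun x => log (P.real {ω | x < L ω}) / x) atTop (𝓝 (-μ))) :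
    Tendsto (fun n : ℕ => log (∫ ω, (1 - c * exp (-(L ω * a))) ^ n ∂P) / log n) atTop
      (𝓝 (-(μ / a))) := by
  have hlimit : ∀ s : ℝ → ℝ, Continuous s → s 0 = 1 →
      Tendsto (fun ε => -μ * (s ε / a)) (𝓝[>] 0) (𝓝 (-(μ / a))) := fun s hs hs0 =>
    ((hs.div_const a).const_mul (-μ)).tendsto' 0 _ (by rw [hs0]; ring) |>.mono_left
      nhdsWithin_le_nhds
  refine tendsto_of_forall_eventually_bounds
    (u := fun n : ℕ => log (∫ ω, (1 - c * exp (-(L ω * a))) ^ n ∂P) / log n)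
    (lo := fun ε n => (log (1 / 2) + log (P.real {ω | (1 + ε) / a * log n < L ω})) / log n)
    (hi := fun ε n => (log 2 + log (P.real {ω | (1 - ε) / a * log n < L ω})) / log n)
    (hlimit (1 + ·) (by fun_prop) (by norm_num)) (hlimit (1 - ·) (by fun_prop) (by norm_num))
    ?_ ?_
  · filter_upwards [self_mem_nhdsWithin] with ε hε
    exact ⟨tendsto_const_add_log_comp_mul_log_div_log htail (div_pos (add_pos one_pos hε) ha) _,
      eventually_log_tail_div_log_le_log_integral_div_log P hL hL0 hc0.le hc1.le ha hμ htail hε⟩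
  · filter_upwards [Ioo_mem_nhdsGT one_pos] with ε hε
    exact ⟨tendsto_const_add_log_comp_mul_log_div_log htail (div_pos (by linarith [hε.2]) ha) _,
      eventually_log_integral_div_log_le_log_tail_div_log P hL hL0 hc0 hc1 ha hμ htail hε.1 hε.2⟩

end Asymptotics

/-- Proposition 1, eq. (6): power law for the upper-bounding number of retransmissions
`P[N̄ > n] = E[(1 - ((λ∧ν)/(M(λ∨ν))) e^{-L(M-1)(λ∨ν)})^n]` in finite population ALOHA. -/
theorem stmt1 {Ω : Type*} {mΩ : MeasurableSpace Ω} (P : Measure Ω) [IsProbabilityMeasure P]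
    (L : Ω → ℝ) (hLm : Measurable L) (hLnn : ∀ ω, 0 ≤ L ω)
    (μ lam ν : ℝ) (hμ : 0 < μ) (hlam : 0 < lam) (hν : 0 < ν)
    (M : ℕ) (hM : 2 ≤ M)
    (htail : Tendsto (fun x : ℝ => Real.log (P {ω | L ω > x}).toReal / x) atTop (nhds (-μ))) :
    Tendsto (fun n : ℕ =>
        Real.log (∫ ω,
            (1 - (min lam ν / ((M : ℝ) * max lam ν)) *
              Real.exp (-(L ω * ((M : ℝ) - 1) * max lam ν))) ^ n ∂P)
          / Real.log n) atTop
      (nhds (-(μ / (((M : ℝ) - 1) * max lam ν)))) := by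
  have hmax : 0 < max lam ν := lt_max_of_lt_left hlam
  have hM' : (2 : ℝ) ≤ M := by exact_mod_cast hM
  have hc0 : 0 < min lam ν / (M * max lam ν) := by positivity
  have hc1 : min lam ν / (M * max lam ν) < 1 := by
    rw [div_lt_one (by positivity)]
    nlinarith [min_le_max (a := lam) (b := ν)]
  simpa only [mul_assoc] using tendsto_log_integral_one_sub_mul_exp_neg_mul_pow_div_log P hLm hLnn
    hc0 hc1 (by nlinarith : 0 < ((M : ℝ) - 1) * max lam ν) hμ.ne' htail
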